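/- Let (v̄, w̄⁺, w̄⁻, b̄, ξ̄) be LP-feasible with objective value z = Obj(v̄, w̄⁺, w̄⁻, b̄, ξ̄), and suppose every LP-feasible tuple has objective value at least z. Let ᾱ : Fin m → ℝ satisfy ᾱ i ≥ 0 for all i and L(t; ᾱ) ≥ z for every relaxed-feasible tuple t. Let j0 : Fin n with w̄⁺ j0 + w̄⁻ j0 = 0, and assume 1 + ∑ i, ᾱ i * y i * x i j0 > 0. Let UB : ℝ. Then every FS-SVM-feasible tuple (v, w⁺, w⁻, b, ξ) with Obj(v, w⁺, w⁻, b, ξ) ≤ UB and (∑ j, v̄ j) + (w⁻ j0) / (-(l j0)) ≤ B satisfies w⁻ j0 ≤ (UB - z) / (1 + ∑ i, ᾱ i * y i * x i j0). -/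

import Mathlib

open Finset

/-- Objective of FS-SVM: sum of hyperplane coefficient magnitudes plus penalized deviations. -/
noncomputable def Obj {m n : ℕ} (C : ℝ) (v wp wm : Fin n → ℝ) (b : ℝ) (ξ : Fin m → ℝ) : ℝ :=
  (∑ j, (wp j + wm j)) + C * ∑ i, ξ i

/-- Feasibility for the LP relaxation LP-FS-SVM. -/
def LPFeasible {m n : ℕ} (x : Fin m → Fin n → ℝ) (y : Fin m → ℝ) (B : ℝ)
    (u l : Fin n → ℝ) (v wp wm : Fin n → ℝ) (b : ℝ) (ξ : Fin m → ℝ) : Prop :=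
  (∀ i, y i * ((∑ j, (wp j - wm j) * x i j) + b) ≥ 1 - ξ i) ∧
  (∑ j, v j) ≤ B ∧
  (∀ j, 0 ≤ wp j ∧ wp j ≤ u j * v j ∧ 0 ≤ wm j ∧ wm j ≤ -(l j) * v j) ∧
  (∀ i, 0 ≤ ξ i) ∧
  (∀ j, 0 ≤ v j ∧ v j ≤ 1)

/-- Feasibility for the mixed-integer problem FS-SVM. -/
def FSFeasible {m n : ℕ} (x : Fin m → Fin n → ℝ) (y : Fin m → ℝ) (B : ℝ)
    (u l : Fin n → ℝ) (v wp wm : Fin n → ℝ) (b : ℝ) (ξ : Fin m → ℝ) : Prop :=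
  (∀ i, y i * ((∑ j, (wp j - wm j) * x i j) + b) ≥ 1 - ξ i) ∧
  (∑ j, v j) ≤ B ∧
  (∀ j, 0 ≤ wp j ∧ wp j ≤ u j * v j ∧ 0 ≤ wm j ∧ wm j ≤ -(l j) * v j) ∧
  (∀ i, 0 ≤ ξ i) ∧
  (∀ j, v j = 0 ∨ v j = 1)

/-- Relaxed feasibility: all LP constraints except the soft-margin constraints (1). -/
def RelaxedFeasible {m n : ℕ} (B : ℝ) (u l : Fin n → ℝ)
    (v wp wm : Fin n → ℝ) (ξ : Fin m → ℝ) : Prop :=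
  (∑ j, v j) ≤ B ∧
  (∀ j, 0 ≤ wp j ∧ wp j ≤ u j * v j ∧ 0 ≤ wm j ∧ wm j ≤ -(l j) * v j) ∧
  (∀ i, 0 ≤ ξ i) ∧
  (∀ j, 0 ≤ v j ∧ v j ≤ 1)

/-- Lagrangian obtained by dualizing the soft-margin constraints (1). -/
noncomputable def Lag {m n : ℕ} (x : Fin m → Fin n → ℝ) (y : Fin m → ℝ) (C : ℝ)
    (v wp wm : Fin n → ℝ) (b : ℝ) (ξ : Fin m → ℝ) (α : Fin m → ℝ) : ℝ :=
  Obj C v wp wm b ξ +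
    ∑ i, α i * (1 - ξ i - y i * ((∑ j, (wp j - wm j) * x i j) + b))

/-! Zeroing the `j0`-th negative weight of an FS-SVM-feasible tuple yields a relaxed-feasible
tuple whose Lagrangian is smaller by exactly `(1 + ∑ i, αb i * y i * x i j0) * wm j0`. The
Lagrangian of the new tuple is at least `z`, while by weak duality that of the original tuple is
at most its objective, hence at most `UB`; so this decrease is at most `UB - z`. -/

theorem Function.update_zero_eq_sub_single {ι G : Type*} [DecidableEq ι] [AddGroup G]
    (f : ι → G) (a : ι) : Function.update f a 0 = f - Pi.single a (f a) := by
  ext j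
  by_cases hj : j = a
  · subst hj; simp
  · simp [hj]

section

variable {m n : ℕ} {x : Fin m → Fin n → ℝ} {y : Fin m → ℝ} {B : ℝ} {u l : Fin n → ℝ}
  {v wp wm : Fin n → ℝ} {b : ℝ} {ξ : Fin m → ℝ}

theorem FSFeasible.relaxedFeasible (h : FSFeasible x y B u l v wp wm b ξ) :
    RelaxedFeasible B u l v wp wm ξ := by
  obtain ⟨-, hbudget, hbounds, hξ, hbinary⟩ := h
  refine ⟨hbudget, hbounds, hξ, fun j => ?_⟩
  rcases hbinary j with hj | hj <;> simp [hj]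

theorem RelaxedFeasible.update_wm_zero (h : RelaxedFeasible B u l v wp wm ξ) (j0 : Fin n) :
    RelaxedFeasible B u l v wp (Function.update wm j0 0) ξ := by
  obtain ⟨hbudget, hbounds, hξ, hv⟩ := h
  refine ⟨hbudget, fun j => ?_, hξ, hv⟩
  obtain ⟨hwp0, hwpu, hwm0, hwml⟩ := hbounds j
  by_cases hj : j = j0
  · subst hj
    rw [Function.update_self]
    exact ⟨hwp0, hwpu, le_rfl, hwm0.trans hwml⟩
  · rw [Function.update_of_ne hj]
    exact hbounds j

theorem Lag_le_Obj (C : ℝ) {α : Fin m → ℝ} (hα : ∀ i, 0 ≤ α i)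
    (hmargin : ∀ i, y i * ((∑ j, (wp j - wm j) * x i j) + b) ≥ 1 - ξ i) :
    Lag x y C v wp wm b ξ α ≤ Obj C v wp wm b ξ := by
  have hpenalty : ∑ i, α i * (1 - ξ i - y i * ((∑ j, (wp j - wm j) * x i j) + b)) ≤ 0 :=
    Finset.sum_nonpos fun i _ => mul_nonpos_of_nonneg_of_nonpos (hα i) (by linarith [hmargin i])
  rw [Lag]
  linarith

end

theorem Lag_update_wm_zero {m n : ℕ} (x : Fin m → Fin n → ℝ) (y : Fin m → ℝ) (C : ℝ)
    (v wp wm : Fin n → ℝ) (b : ℝ) (ξ : Fin m → ℝ) (α : Fin m → ℝ) (j0 : Fin n) :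
    Lag x y C v wp (Function.update wm j0 0) b ξ α =
      Lag x y C v wp wm b ξ α - (1 + ∑ i, α i * y i * x i j0) * wm j0 := by
  have hobj : ∑ j, (wp j + Function.update wm j0 0 j) = ∑ j, (wp j + wm j) - wm j0 := by
    simp [Function.update_zero_eq_sub_single, Finset.sum_add_distrib, add_sub_assoc]
  have hmargin (i : Fin m) : ∑ j, (wp j - Function.update wm j0 0 j) * x i j =
      ∑ j, (wp j - wm j) * x i j + wm j0 * x i j0 := by
    simp only [Function.update_zero_eq_sub_single, Pi.sub_apply, Pi.single_apply, sub_mul,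
      ite_mul, zero_mul, Finset.sum_sub_distrib, Finset.sum_ite_eq', Finset.mem_univ, if_true]
    ring
  have hpenalty :
      ∑ i, α i * (1 - ξ i - y i * ((∑ j, (wp j - Function.update wm j0 0 j) * x i j) + b)) =
      ∑ i, α i * (1 - ξ i - y i * ((∑ j, (wp j - wm j) * x i j) + b)) -
        (∑ i, α i * y i * x i j0) * wm j0 := by
    rw [Finset.sum_mul, ← Finset.sum_sub_distrib]
    exact Finset.sum_congr rfl fun i _ => by rw [hmargin]; ring
  rw [Lag, Lag, Obj, Obj, hobj, hpenalty]
  ring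

theorem stmt3_general
    (m n : ℕ) (x : Fin m → Fin n → ℝ) (y : Fin m → ℝ)
    (C : ℝ) (B : ℝ) (u l : Fin n → ℝ)
    (vb : Fin n → ℝ)
    (z : ℝ)
    (αb : Fin m → ℝ) (hα : ∀ i, 0 ≤ αb i)
    (hdual : ∀ (v wp wm : Fin n → ℝ) (b : ℝ) (ξ : Fin m → ℝ),
      RelaxedFeasible B u l v wp wm ξ → Lag x y C v wp wm b ξ αb ≥ z)
    (j0 : Fin n)
    (hpos : 0 < 1 + ∑ i, αb i * y i * x i j0)
    (UB : ℝ) :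
    ∀ (v wp wm : Fin n → ℝ) (b : ℝ) (ξ : Fin m → ℝ),
      FSFeasible x y B u l v wp wm b ξ →
      Obj C v wp wm b ξ ≤ UB →
      (∑ j, vb j) + wm j0 / (-(l j0)) ≤ B →
      wm j0 ≤ (UB - z) / (1 + ∑ i, αb i * y i * x i j0) := by
  intro v wp wm b ξ hfs hUB _
  have hdropped := hdual v wp (Function.update wm j0 0) b ξ (hfs.relaxedFeasible.update_wm_zero j0)
  rw [Lag_update_wm_zero] at hdropped
  have hweak : Lag x y C v wp wm b ξ αb ≤ Obj C v wp wm b ξ := Lag_le_Obj C hα hfs.1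
  rw [le_div_iff₀ hpos]
  linarith

theorem stmt3
    (m n : ℕ) (x : Fin m → Fin n → ℝ) (y : Fin m → ℝ)
    (hy : ∀ i, y i = 1 ∨ y i = -1)
    (C : ℝ) (hC : 0 < C) (B : ℝ) (u l : Fin n → ℝ)
    (hu : ∀ j, 0 < u j) (hl : ∀ j, l j < 0)
    (vb wpb wmb : Fin n → ℝ) (bb : ℝ) (ξb : Fin m → ℝ)
    (hfeas : LPFeasible x y B u l vb wpb wmb bb ξb)
    (z : ℝ) (hz : z = Obj C vb wpb wmb bb ξb)
    (hopt : ∀ (v wp wm : Fin n → ℝ) (b : ℝ) (ξ : Fin m → ℝ),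
      LPFeasible x y B u l v wp wm b ξ → Obj C v wp wm b ξ ≥ z)
    (αb : Fin m → ℝ) (hα : ∀ i, 0 ≤ αb i)
    (hdual : ∀ (v wp wm : Fin n → ℝ) (b : ℝ) (ξ : Fin m → ℝ),
      RelaxedFeasible B u l v wp wm ξ → Lag x y C v wp wm b ξ αb ≥ z)
    (j0 : Fin n) (hj0 : wpb j0 + wmb j0 = 0)
    (hpos : 0 < 1 + ∑ i, αb i * y i * x i j0)
    (UB : ℝ) :
    ∀ (v wp wm : Fin n → ℝ) (b : ℝ) (ξ : Fin m → ℝ),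
      FSFeasible x y B u l v wp wm b ξ →
      Obj C v wp wm b ξ ≤ UB →
      (∑ j, vb j) + wm j0 / (-(l j0)) ≤ B →
      wm j0 ≤ (UB - z) / (1 + ∑ i, αb i * y i * x i j0) :=
  stmt3_general m n x y C B u l vb z αb hα hdual j0 hpos UB
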